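/- If F : F_2^n → F_2^n is an APN function with n ≥ 3, then lin(F) ≤ 2^n − 4. -/

import Mathlib

def IsAPN {n : ℕ} (F : (Fin n → ZMod 2) → (Fin n → ZMod 2)) : Prop :=
  ∀ a : Fin n → ZMod 2, a ≠ 0 → ∀ b : Fin n → ZMod 2,
    (Finset.univ.filter (fun x => F x + F (x + a) = b)).card ≤ 2

def dot {t : ℕ} (a b : Fin t → ZMod 2) : ZMod 2 := ∑ i, a i * b i

noncomputable def walshF {n : ℕ} (F : (Fin n → ZMod 2) → (Fin n → ZMod 2))
    (a b : Fin n → ZMod 2) : ℤ :=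
  ∑ x : Fin n → ZMod 2, (-1 : ℤ) ^ (dot a x + dot b (F x)).val

noncomputable def linF {n : ℕ} (F : (Fin n → ZMod 2) → (Fin n → ZMod 2)) : ℕ :=
  Finset.sup (Finset.univ.filter
      (fun p : (Fin n → ZMod 2) × (Fin n → ZMod 2) => p.2 ≠ 0))
    (fun p => (walshF F p.1 p.2).natAbs)

/-!
An affine change `F ↦ F + (a ⬝ᵥ x + c + 1) • v` with `b ⬝ᵥ v = 1` keeps `F` APN and turns the level
set `{x | a ⬝ᵥ x + b ⬝ᵥ F x = c}` into `{x | b ⬝ᵥ F x = 1}`. So it suffices that the latter has at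
least two points for every APN `F` and `b ≠ 0`: then `W_F(a, b)` is the difference of two counts,
each at least `2`, adding up to `2ⁿ`.

If `b ⬝ᵥ F` were `1` at most at one point `x₀`, replace `F x₀` by `F x₀ + ∑ F`. The new function
maps into `b⊥ ≅ 𝔽₂ⁿ⁻¹`, and the APN property forces each of its derivatives in a nonzero direction
to hit every point of `b⊥` exactly twice. It would be a vectorial bent function `𝔽₂ⁿ → 𝔽₂ⁿ⁻¹`,
which Nyberg's bound `n - 1 ≤ n / 2` rules out for `n ≥ 3`.
-/

open Finset ZModModule

local notation "𝔽₂^" n:max => Fin n → ZMod 2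

namespace APN

def sgn (s : ZMod 2) : ℤ := (-1) ^ s.val

lemma sgn_add : ∀ s t : ZMod 2, sgn (s + t) = sgn s * sgn t := by decide

lemma sgn_add_one : ∀ s : ZMod 2, sgn (s + 1) = -sgn s := by decide

lemma natAbs_sgn : ∀ s : ZMod 2, (sgn s).natAbs = 1 := by decide

lemma eq_one_of_ne_zero : ∀ s : ZMod 2, s ≠ 0 → s = 1 := by decide

lemma natAbs_sum_sgn_le {α : Type*} [Fintype α] (f : α → ZMod 2)
    (h0 : 2 ≤ #{x | f x = 0}) (h1 : 2 ≤ #{x | f x = 1}) :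
    (∑ x, sgn (f x)).natAbs ≤ Fintype.card α - 4 := by
  have hcard : #{x | f x = 0} + #{x | f x = 1} = Fintype.card α := by
    rw [← card_univ, ← card_filter_add_card_filter_not (s := univ) (f · = 0)]
    congr 2
    exact filter_congr fun x _ => ⟨fun h => h ▸ one_ne_zero, eq_one_of_ne_zero _⟩
  have hsgn : ∀ s : ZMod 2, sgn s = (if s = 0 then 1 else 0) - (if s = 1 then 1 else 0) := by
    decide
  have hsum : ∑ x, sgn (f x) = #{x | f x = 0} - #{x | f x = 1} := by
    simp only [hsgn, sum_sub_distrib, sum_boole]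
  omega

lemma exists_eq_two_mul_of_sq_eq_two_pow {t : ℤ} {n : ℕ} (h : t ^ 2 = 2 ^ n) :
    ∃ k, n = 2 * k := by
  have hsq : t.natAbs ^ 2 = 2 ^ n := by simpa [Int.natAbs_pow] using congrArg Int.natAbs h
  obtain ⟨i, -, hi⟩ := (Nat.dvd_prime_pow Nat.prime_two).1 (Dvd.intro _ (by rw [← hsq, sq]))
  rw [hi, ← pow_mul] at hsq
  exact ⟨i, by rw [← Nat.pow_right_injective le_rfl hsq, mul_comm]⟩

lemma exists_odd_of_natAbs_eq {ι : Type*} {s : Finset ι} {f : ι → ℤ} {N : ℕ} (hN : N ≠ 0)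
    (hs : Odd #s) (hf : ∀ i ∈ s, (f i).natAbs = N) :
    ∃ K, Odd K ∧ ∑ i ∈ s, f i = N * K := by
  refine ⟨∑ i ∈ s, (f i).sign, ?_, ?_⟩
  · have heven : Even (∑ i ∈ s, ((f i).sign - 1)) := even_sum _ fun i hi => by
      rcases Int.natAbs_eq (f i) with h | h <;> rw [h, hf i hi]
      · simp [Int.sign_natCast_of_ne_zero hN]
      · simp [Int.sign_neg, Int.sign_natCast_of_ne_zero hN]
    simpa [sum_sub_distrib] using heven.add_odd (Odd.natCast (R := ℤ) hs)
  · rw [mul_sum]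
    exact sum_congr rfl fun i hi => by rw [← hf i hi, mul_comm, Int.sign_mul_natAbs]

lemma even_of_mul_eq_two_pow_add {k N : ℕ} {K m : ℤ} (hk : 2 ≤ k) (hN : 2 * N = 2 ^ (2 * k))
    (h : N * m = 2 ^ (2 * k) + 2 ^ k * K) : Even K := by
  obtain ⟨l, rfl⟩ := Nat.exists_eq_add_of_le' hk
  have hN' : N = 2 ^ (2 * l + 3) := by
    rw [show 2 * (l + 2) = 2 * l + 3 + 1 by ring, pow_succ] at hN
    omega
  subst hN'
  push_cast at h
  refine ⟨2 ^ l * m - 2 ^ (l + 1), mul_left_cancel₀ (pow_ne_zero (l + 2) two_ne_zero) ?_⟩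
  linear_combination -h

lemma card_fiber_eq_of_le {α β : Type*} [Fintype α] [DecidableEq β] {g : α → β} {T : Finset β}
    {k : ℕ} (hg : ∀ x, g x ∈ T) (hcard : Fintype.card α = #T * k)
    (hle : ∀ y ∈ T, #{x | g x = y} ≤ k) : ∀ y ∈ T, #{x | g x = y} = k := by
  have hsum := card_eq_sum_card_fiberwise (s := univ) (t := T) fun x _ => hg x
  rw [card_univ, hcard, ← smul_eq_mul, ← sum_const] at hsum
  exact (sum_eq_sum_iff_of_le hle).1 hsum.symm

section CharTwo

variable {G M : Type*} [AddCommGroup G] [Module (ZMod 2) G] [DecidableEq G]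

lemma add_mem_pair_add_iff {x₀ e y : G} :
    y + e ∈ ({x₀, x₀ + e} : Finset G) ↔ y ∈ ({x₀, x₀ + e} : Finset G) := by
  have hshift : ∀ z, y + e = z ↔ y = z + e := fun z => by rw [← eq_sub_iff_add_eq, sub_eq_add]
  simp only [mem_insert, mem_singleton, hshift, add_assoc, add_self, add_zero]
  exact or_comm

lemma sum_notMem_of_card_add_one {H I : Finset G} (hIH : I ⊆ H) (hcard : #I + 1 = #H)
    (hH : ∑ h ∈ H, h = 0) : ∑ i ∈ I, i ∉ I := by
  obtain ⟨y, hy⟩ := card_eq_one.1 (by rw [card_sdiff_of_subset hIH]; omega : #(H \ I) = 1)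
  have hsplit := sum_sdiff hIH (f := fun h => h)
  rw [hy, sum_singleton, hH, add_eq_zero_iff_eq_neg, ZModModule.neg_eq_self] at hsplit
  rw [← hsplit]
  exact (mem_sdiff.1 (hy ▸ mem_singleton_self y)).2

lemma update_add_update_add [AddCommMonoid M] (F : G → M) {x₀ e : G} (v : M) (he : e ≠ 0)
    (x : G) :
    Function.update F x₀ (F x₀ + v) x + Function.update F x₀ (F x₀ + v) (x + e)
      = if x ∈ ({x₀, x₀ + e} : Finset G) then F x₀ + F (x₀ + e) + v else F x + F (x + e) := by
  have hne : x₀ + e ≠ x₀ := by simpa using he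
  by_cases hx : x ∈ ({x₀, x₀ + e} : Finset G)
  · rw [if_pos hx]
    rcases mem_insert.1 hx with rfl | hx
    · rw [Function.update_self, Function.update_of_ne hne]
      abel
    · rw [mem_singleton.1 hx, add_assoc, add_self, add_zero, Function.update_self,
        Function.update_of_ne hne]
      abel
  · rw [if_neg hx]
    simp only [mem_insert, mem_singleton, not_or] at hx
    rw [Function.update_of_ne hx.1, Function.update_of_ne fun h => hx.2 ?_]
    rw [← h, add_assoc, add_self, add_zero]

end CharTwo

variable {n : ℕ}

def hyperplane (c : 𝔽₂^n) : Finset (𝔽₂^n) := {x | c ⬝ᵥ x = 0}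

lemma mem_hyperplane {c x : 𝔽₂^n} : x ∈ hyperplane c ↔ c ⬝ᵥ x = 0 := by
  simp [hyperplane]

lemma add_mem_hyperplane {c x y : 𝔽₂^n} (hx : x ∈ hyperplane c) (hy : y ∈ hyperplane c) :
    x + y ∈ hyperplane c := by
  rw [mem_hyperplane] at *
  rw [dotProduct_add, hx, hy, add_zero]

lemma exists_dotProduct_eq_one {z : 𝔽₂^n} (hz : z ≠ 0) : ∃ r, z ⬝ᵥ r = 1 := by
  obtain ⟨i, hi⟩ := Function.ne_iff.mp hz
  exact ⟨Pi.single i 1, by rw [dotProduct_single, mul_one]; exact eq_one_of_ne_zero _ hi⟩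

lemma exists_mem_hyperplane_dotProduct_eq_one {c d z : 𝔽₂^n} (hcd : c ⬝ᵥ d = 1)
    (hz : z ∈ hyperplane d) (hz0 : z ≠ 0) : ∃ r ∈ hyperplane c, z ⬝ᵥ r = 1 := by
  obtain ⟨r, hr⟩ := exists_dotProduct_eq_one hz0
  rw [mem_hyperplane, dotProduct_comm] at hz
  refine ⟨r + (c ⬝ᵥ r) • d, ?_, ?_⟩
  · rw [mem_hyperplane, dotProduct_add, dotProduct_smul, hcd, smul_eq_mul, mul_one, add_self]
  · rw [dotProduct_add, dotProduct_smul, hr, hz, smul_zero, add_zero]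

lemma sum_eq_sum_inter_hyperplane {M : Type*} [AddCommMonoid M] {A : Finset (𝔽₂^n)}
    {c r : 𝔽₂^n} (hcr : c ⬝ᵥ r = 1) (hA : ∀ x ∈ A, x + r ∈ A) (f : 𝔽₂^n → M) :
    ∑ x ∈ A, f x = ∑ x ∈ A ∩ hyperplane c, (f x + f (x + r)) := by
  rw [← sum_inter_add_sum_sdiff A (hyperplane c), sum_add_distrib]
  congr 1
  refine sum_nbij' (· + r) (· + r) ?_ ?_ (fun x _ => by simp [add_assoc, add_self])
    (fun x _ => by simp [add_assoc, add_self]) (fun x _ => by simp [add_assoc, add_self])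
  all_goals
    intro x hx
    simp only [mem_inter, mem_sdiff, mem_hyperplane, dotProduct_add, hcr] at hx ⊢
    refine ⟨hA x hx.1, ?_⟩
  · rw [eq_one_of_ne_zero _ hx.2]
    decide
  · rw [hx.2]
    decide

lemma card_eq_two_mul_card_inter_hyperplane {A : Finset (𝔽₂^n)} {c r : 𝔽₂^n}
    (hcr : c ⬝ᵥ r = 1) (hA : ∀ x ∈ A, x + r ∈ A) :
    #A = 2 * #(A ∩ hyperplane c) := by
  have := sum_eq_sum_inter_hyperplane hcr hA (fun _ => 1)
  simp only [sum_const, smul_eq_mul] at this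
  omega

lemma two_mul_card_hyperplane {c : 𝔽₂^n} (hc : c ≠ 0) : 2 * #(hyperplane c) = 2 ^ n := by
  obtain ⟨r, hr⟩ := exists_dotProduct_eq_one hc
  simpa using (card_eq_two_mul_card_inter_hyperplane hr (A := univ) fun x _ => mem_univ _).symm

lemma sum_hyperplane_eq_zero (hn : 3 ≤ n) {b : 𝔽₂^n} (hb : b ≠ 0) :
    ∑ h ∈ hyperplane b, h = 0 := by
  have hH := two_mul_card_hyperplane hb
  have h2n : 2 ^ n = 2 ^ (n - 3) * 2 ^ 3 := by rw [← pow_add, Nat.sub_add_cancel hn]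
  have : 0 < 2 ^ (n - 3) := by positivity
  obtain ⟨r, hr, hr0⟩ := exists_mem_ne (s := hyperplane b) (by omega) 0
  obtain ⟨c, hrc⟩ := exists_dotProduct_eq_one hr0
  rw [dotProduct_comm] at hrc
  have hclosed : ∀ x ∈ hyperplane b, x + r ∈ hyperplane b := fun x hx => add_mem_hyperplane hx hr
  have hhalf := card_eq_two_mul_card_inter_hyperplane hrc hclosed
  obtain ⟨m, hm⟩ : Even #(hyperplane b ∩ hyperplane c) := ⟨2 ^ (n - 3), by omega⟩
  rw [sum_eq_sum_inter_hyperplane hrc hclosed fun h => h]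
  simp only [← add_assoc, add_self, zero_add, sum_const, hm, add_nsmul]

lemma deriv_mem_image_inter_hyperplane {M : Type*} [AddCommMonoid M] [DecidableEq M]
    {F : 𝔽₂^n → M} {S : Finset (𝔽₂^n)} {c e x : 𝔽₂^n} (hce : c ⬝ᵥ e = 1)
    (hS : ∀ y ∈ S, y + e ∈ S) (hx : x ∈ S) :
    F x + F (x + e) ∈ (S ∩ hyperplane c).image fun y => F y + F (y + e) := by
  by_cases hxc : x ∈ hyperplane c
  · exact mem_image_of_mem _ (mem_inter.2 ⟨hx, hxc⟩)
  · refine mem_image.2 ⟨x + e, mem_inter.2 ⟨hS x hx, ?_⟩, ?_⟩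
    · rw [mem_hyperplane] at hxc ⊢
      rw [dotProduct_add, hce, eq_one_of_ne_zero _ hxc]
      decide
    · rw [add_assoc, add_self, add_zero, add_comm]

lemma sum_sgn_eq_zero {A : Finset (𝔽₂^n)} {r z : 𝔽₂^n} (hA : ∀ x ∈ A, x + r ∈ A)
    (hrz : r ⬝ᵥ z = 1) : ∑ u ∈ A, sgn (u ⬝ᵥ z) = 0 := by
  refine sum_involution (fun u _ => u + r) (fun u _ => ?_) (fun u _ _ h => ?_) hA
    (fun u _ => by simp [add_assoc, add_self])
  · rw [add_dotProduct, hrz, sgn_add_one, add_neg_cancel]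
  · rw [add_eq_left] at h
    simp [h] at hrz

lemma sum_hyperplane_sgn_eq_zero {c d z : 𝔽₂^n} (hcd : c ⬝ᵥ d = 1) (hz : z ∈ hyperplane d)
    (hz0 : z ≠ 0) : ∑ u ∈ hyperplane c, sgn (u ⬝ᵥ z) = 0 := by
  obtain ⟨r, hr, hzr⟩ := exists_mem_hyperplane_dotProduct_eq_one hcd hz hz0
  exact sum_sgn_eq_zero (fun x hx => add_mem_hyperplane hx hr) (by rwa [dotProduct_comm])

lemma sq_sum_sgn (Ψ : 𝔽₂^n → 𝔽₂^n) (u : 𝔽₂^n) :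
    (∑ x, sgn (u ⬝ᵥ Ψ x)) ^ 2 = ∑ e, ∑ x, sgn (u ⬝ᵥ (Ψ x + Ψ (x + e))) := by
  rw [sq, sum_mul_sum,
    sum_comm (s := univ) (t := univ) (f := fun e x => sgn (u ⬝ᵥ (Ψ x + Ψ (x + e))))]
  refine sum_congr rfl fun x _ => (Fintype.sum_equiv (Equiv.addLeft x) _ _ fun e => ?_).symm
  rw [dotProduct_add, sgn_add]
  rfl

/-- `Ψ` is a vectorial bent function from `𝔽₂ⁿ` to `b⊥ ≅ 𝔽₂ⁿ⁻¹`, in Nyberg's characterization by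
balanced derivatives. -/
structure IsBentInto (Ψ : 𝔽₂^n → 𝔽₂^n) (b : 𝔽₂^n) : Prop where
  mem : ∀ x, Ψ x ∈ hyperplane b
  card_fiber_deriv : ∀ e ≠ 0, ∀ h ∈ hyperplane b, #{x | Ψ x + Ψ (x + e) = h} = 2

namespace IsBentInto

variable {Ψ : 𝔽₂^n → 𝔽₂^n} {b c u : 𝔽₂^n}

lemma sum_sgn_deriv_eq_zero (hΨ : IsBentInto Ψ b) (hcb : c ⬝ᵥ b = 1) (hu : u ∈ hyperplane c)
    (hu0 : u ≠ 0) {e : 𝔽₂^n} (he : e ≠ 0) : ∑ x, sgn (u ⬝ᵥ (Ψ x + Ψ (x + e))) = 0 := by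
  have hmaps : ∀ x ∈ univ, Ψ x + Ψ (x + e) ∈ hyperplane b := fun x _ =>
    add_mem_hyperplane (hΨ.mem x) (hΨ.mem _)
  rw [← sum_fiberwise_of_maps_to hmaps]
  calc ∑ h ∈ hyperplane b, ∑ x with Ψ x + Ψ (x + e) = h, sgn (u ⬝ᵥ (Ψ x + Ψ (x + e)))
      = ∑ h ∈ hyperplane b, 2 * sgn (h ⬝ᵥ u) := sum_congr rfl fun h hh => by
        rw [sum_congr rfl fun x hx => by rw [(mem_filter.1 hx).2], sum_const,
          hΨ.card_fiber_deriv e he h hh, dotProduct_comm, two_nsmul, two_mul]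
    _ = 0 := by
      rw [← mul_sum, sum_hyperplane_sgn_eq_zero (by rwa [dotProduct_comm]) hu hu0, mul_zero]

lemma sq_sum_sgn_eq (hΨ : IsBentInto Ψ b) (hcb : c ⬝ᵥ b = 1) (hu : u ∈ hyperplane c)
    (hu0 : u ≠ 0) : (∑ x, sgn (u ⬝ᵥ Ψ x)) ^ 2 = 2 ^ n := by
  rw [sq_sum_sgn, sum_eq_single 0 (fun e _ he => hΨ.sum_sgn_deriv_eq_zero hcb hu hu0 he)
    (by simp)]
  simp [add_self, sgn]

lemma sum_sgn_mul_sum_sgn (hΨ : IsBentInto Ψ b) (hcb : c ⬝ᵥ b = 1) {y : 𝔽₂^n}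
    (hy : y ∈ hyperplane b) :
    ∑ u ∈ hyperplane c, sgn (u ⬝ᵥ y) * ∑ x, sgn (u ⬝ᵥ Ψ x)
      = #(hyperplane c) * #{x | Ψ x = y} := by
  have hinner : ∀ x, ∑ u ∈ hyperplane c, sgn (u ⬝ᵥ (y + Ψ x))
      = if Ψ x = y then (#(hyperplane c) : ℤ) else 0 := by
    intro x
    split_ifs with hx
    · simp [hx, add_self, sgn]
    · refine sum_hyperplane_sgn_eq_zero hcb (add_mem_hyperplane hy (hΨ.mem x)) fun h => hx ?_
      rw [add_eq_zero_iff_eq_neg, ZModModule.neg_eq_self] at h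
      exact h.symm
  simp_rw [mul_sum, ← sgn_add, ← dotProduct_add]
  rw [sum_comm, sum_congr rfl fun x _ => hinner x, sum_ite, sum_const_zero, add_zero, sum_const,
    nsmul_eq_mul, mul_comm]

end IsBentInto

/-- Choose `c` with `c ⬝ᵥ b = 1`, so that `c⊥` is a complement of `b`. The components `u ⬝ᵥ Ψ`,
`u ∈ c⊥ \ {0}`, are bent, so `n = 2k`; Fourier inversion over `c⊥` writes `#c⊥ · #Ψ⁻¹(Ψ 0)` as
`2ⁿ` plus an odd number of terms `±2ᵏ`, which is impossible modulo `2ᵏ⁺¹` once `k ≥ 2`. -/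
theorem not_isBentInto (hn : 3 ≤ n) {Ψ : 𝔽₂^n → 𝔽₂^n} {b : 𝔽₂^n} (hb : b ≠ 0) :
    ¬ IsBentInto Ψ b := by
  intro hΨ
  obtain ⟨c, hbc⟩ := exists_dotProduct_eq_one hb
  have hcb : c ⬝ᵥ b = 1 := by rwa [dotProduct_comm]
  have hc : c ≠ 0 := by rintro rfl; simp at hcb
  have hR := two_mul_card_hyperplane hc
  have h8 : 2 ^ 3 ≤ 2 ^ n := Nat.pow_le_pow_right two_pos hn
  have h0R : (0 : 𝔽₂^n) ∈ hyperplane c := by simp [mem_hyperplane]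
  obtain ⟨u₀, hu₀, hu₀0⟩ := exists_mem_ne (s := hyperplane c) (by omega) 0
  obtain ⟨k, rfl⟩ := exists_eq_two_mul_of_sq_eq_two_pow (hΨ.sq_sum_sgn_eq hcb hu₀ hu₀0)
  have hk : 2 ≤ k := by omega
  have hodd : Odd #((hyperplane c).erase 0) := by
    have : 4 ∣ 2 ^ (2 * k) := Nat.pow_dvd_pow 2 (by omega : 2 ≤ 2 * k)
    rw [card_erase_of_mem h0R, Nat.odd_iff]
    omega
  have habs : ∀ u ∈ (hyperplane c).erase 0,
      (sgn (u ⬝ᵥ Ψ 0) * ∑ x, sgn (u ⬝ᵥ Ψ x)).natAbs = 2 ^ k := by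
    intro u hu
    obtain ⟨hu0, hu⟩ := mem_erase.1 hu
    have := (Int.natAbs_eq_iff_sq_eq (b := 2 ^ k)).2
      (by rw [hΨ.sq_sum_sgn_eq hcb hu hu0, ← pow_mul, mul_comm])
    simpa [Int.natAbs_mul, natAbs_sgn] using this
  obtain ⟨K, hK, hsum⟩ := exists_odd_of_natAbs_eq (by positivity) hodd habs
  have hinv := hΨ.sum_sgn_mul_sum_sgn hcb (hΨ.mem 0)
  rw [← add_sum_erase _ _ h0R, hsum] at hinv
  simp only [sgn, zero_dotProduct, ZMod.val_zero, pow_zero, sum_const, card_univ,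
    Fintype.card_pi, ZMod.card, prod_const, Fintype.card_fin, Int.nsmul_eq_mul, Nat.cast_pow,
    Nat.cast_ofNat, mul_one, one_mul] at hinv
  exact Int.not_even_iff_odd.2 hK (even_of_mul_eq_two_pow_add hk hR hinv.symm)

end APN

namespace IsAPN

open APN

variable {n : ℕ} {F : 𝔽₂^n → 𝔽₂^n}

lemma add_dotProduct_smul (hF : IsAPN F) (a v : 𝔽₂^n) (γ : ZMod 2) :
    IsAPN fun x => F x + (a ⬝ᵥ x + γ) • v := by
  intro α hα β
  have hderiv : ∀ x, F x + (a ⬝ᵥ x + γ) • v + (F (x + α) + (a ⬝ᵥ (x + α) + γ) • v)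
      = F x + F (x + α) + (a ⬝ᵥ α) • v := by
    intro x
    have hcoef : ∀ s t g : ZMod 2, s + g + (s + t + g) = t := by decide
    rw [add_add_add_comm, ← add_smul, dotProduct_add, hcoef]
  refine (card_le_card fun x hx => ?_).trans (hF α hα (β + (a ⬝ᵥ α) • v))
  simp only [mem_filter, mem_univ, true_and] at hx ⊢
  rw [← hx, hderiv, add_assoc, add_self, add_zero]

lemma injOn_deriv (hF : IsAPN F) {c e : 𝔽₂^n} (he : e ≠ 0) (hce : c ⬝ᵥ e = 1) :
    Set.InjOn (fun x => F x + F (x + e)) (hyperplane c) := by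
  intro x hx y hy hxy
  by_contra hne
  refine (hF e he (F x + F (x + e))).not_gt
    (two_lt_card.2 ⟨x, ?_, x + e, ?_, y, ?_, fun h => he ?_, hne, fun h => ?_⟩)
  · simp
  · simp only [mem_filter, mem_univ, true_and]
    rw [add_assoc, add_self, add_zero, add_comm]
  · simpa using hxy.symm
  · simpa using h
  · rw [mem_coe, mem_hyperplane] at hx hy
    rw [← h, dotProduct_add, hx, hce] at hy
    exact one_ne_zero hy

/-- Off `{x₀, x₀ + e}` the derivative pairs `{x, x + e}` take distinct values in `b⊥`, one fewer
than `#b⊥`; as `∑ b⊥ = 0`, the missed value is the sum of the values taken, i.e. of `F` over the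
complement of `{x₀, x₀ + e}`. -/
lemma deriv_ne_add_sum (hn : 3 ≤ n) (hF : IsAPN F) {b x₀ e x : 𝔽₂^n} (hb : b ≠ 0)
    (hF₀ : ∀ y ≠ x₀, F y ∈ hyperplane b) (he : e ≠ 0) (hx : x ∉ ({x₀, x₀ + e} : Finset _)) :
    F x + F (x + e) ≠ F x₀ + F (x₀ + e) + ∑ y, F y := by
  obtain ⟨c, hce⟩ : ∃ c, c ⬝ᵥ e = 1 := by
    obtain ⟨c, hc⟩ := exists_dotProduct_eq_one he
    exact ⟨c, by rwa [dotProduct_comm]⟩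
  set P : Finset (𝔽₂^n) := {x₀, x₀ + e}
  set D := fun y => F y + F (y + e)
  have hclosed : ∀ y ∈ univ \ P, y + e ∈ univ \ P := fun y hy => by
    rw [mem_sdiff] at hy ⊢
    exact ⟨mem_univ _, by rw [add_mem_pair_add_iff]; exact hy.2⟩
  set A := (univ \ P) ∩ hyperplane c
  have hinj : Set.InjOn D A := (hF.injOn_deriv he hce).mono (by simp [A])
  have himage : A.image D ⊆ hyperplane b := by
    simp only [subset_iff, mem_image, A, mem_inter, mem_sdiff, mem_univ, true_and]
    rintro _ ⟨y, ⟨hyP, -⟩, rfl⟩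
    exact add_mem_hyperplane (hF₀ y fun h => hyP (h ▸ mem_insert_self _ _))
      (hF₀ (y + e) fun h => hyP (add_mem_pair_add_iff.1 (h ▸ mem_insert_self _ _)))
  have hne : x₀ ≠ x₀ + e := by simpa using he
  have hcard : #(A.image D) + 1 = #(hyperplane b) := by
    have hA : #(univ \ P) = 2 * #A := card_eq_two_mul_card_inter_hyperplane hce hclosed
    have hH := two_mul_card_hyperplane hb
    rw [card_sdiff_of_subset (subset_univ P), card_univ, card_pair hne] at hA
    simp only [Fintype.card_pi, ZMod.card, prod_const, card_univ, Fintype.card_fin] at hA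
    have : 2 ≤ 2 ^ n := Nat.le_self_pow (by omega) 2
    rw [card_image_of_injOn hinj]
    omega
  have hsum : ∑ h ∈ A.image D, h = F x₀ + F (x₀ + e) + ∑ y, F y := by
    rw [sum_image hinj, ← sum_eq_sum_inter_hyperplane hce hclosed F,
      ← sum_sdiff (subset_univ P) (f := F), sum_pair hne, add_left_comm, add_self, add_zero]
  intro hxz
  refine sum_notMem_of_card_add_one himage hcard (sum_hyperplane_eq_zero hn hb) ?_
  rw [hsum, ← hxz]
  exact deriv_mem_image_inter_hyperplane (F := F) hce hclosed (mem_sdiff.2 ⟨mem_univ _, hx⟩)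

lemma isBentInto_update (hn : 3 ≤ n) (hF : IsAPN F) {b x₀ : 𝔽₂^n} (hb : b ≠ 0)
    (hF₀ : ∀ x ≠ x₀, F x ∈ hyperplane b) :
    IsBentInto (Function.update F x₀ (F x₀ + ∑ x, F x)) b := by
  have hmem : ∀ x, Function.update F x₀ (F x₀ + ∑ x, F x) x ∈ hyperplane b := by
    intro x
    rcases eq_or_ne x x₀ with rfl | hx
    · rw [Function.update_self, mem_hyperplane, dotProduct_add, dotProduct_sum,
        sum_eq_single x (fun y _ hy => mem_hyperplane.1 (hF₀ y hy)) (by simp), add_self]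
    · rw [Function.update_of_ne hx]
      exact hF₀ x hx
  refine ⟨hmem, fun e he => card_fiber_eq_of_le
    (fun x => add_mem_hyperplane (hmem x) (hmem _)) ?_ fun h _ => ?_⟩
  · have := two_mul_card_hyperplane hb
    simp only [Fintype.card_pi, ZMod.card, prod_const, card_univ, Fintype.card_fin]
    omega
  simp only [update_add_update_add F _ he]
  by_cases hz : h = F x₀ + F (x₀ + e) + ∑ x, F x
  · refine (card_le_card (t := {x₀, x₀ + e}) fun x hx => ?_).trans card_le_two
    by_contra hxP
    rw [mem_filter, if_neg hxP, hz] at hx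
    exact hF.deriv_ne_add_sum hn hb hF₀ he hxP hx.2
  · refine (card_le_card fun x hx => ?_).trans (hF e he h)
    rw [mem_filter] at hx ⊢
    split_ifs at hx with hxP
    · exact absurd hx.2.symm hz
    · exact hx

lemma two_le_card_dotProduct_eq_one (hn : 3 ≤ n) (hF : IsAPN F) {b : 𝔽₂^n} (hb : b ≠ 0) :
    2 ≤ #{x | b ⬝ᵥ F x = 1} := by
  by_contra! h
  obtain ⟨x₀, hx₀⟩ := card_le_one_iff_subset_singleton.1 (Nat.le_of_lt_succ h)
  refine not_isBentInto hn hb (hF.isBentInto_update (x₀ := x₀) hn hb fun x hx => ?_)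
  rw [mem_hyperplane]
  by_contra hne
  exact hx (mem_singleton.1 (hx₀ (mem_filter.2 ⟨mem_univ _, eq_one_of_ne_zero _ hne⟩)))

lemma two_le_card_dotProduct_add_eq (hn : 3 ≤ n) (hF : IsAPN F) {b : 𝔽₂^n} (hb : b ≠ 0)
    (a : 𝔽₂^n) (c : ZMod 2) : 2 ≤ #{x | a ⬝ᵥ x + b ⬝ᵥ F x = c} := by
  obtain ⟨v, hv⟩ := exists_dotProduct_eq_one hb
  have hlevel : ∀ s : ZMod 2, s + (c + 1) = 1 ↔ s = c := by decide +revert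
  refine ((hF.add_dotProduct_smul a v (c + 1)).two_le_card_dotProduct_eq_one hn hb).trans
    (card_le_card fun x hx => ?_)
  simp only [mem_filter, mem_univ, true_and] at hx ⊢
  rwa [dotProduct_add, dotProduct_smul, hv, smul_eq_mul, mul_one, ← add_assoc,
    add_comm (b ⬝ᵥ F x), hlevel] at hx

end IsAPN

theorem stmt_14 {n : ℕ} (hn : 3 ≤ n) (F : (Fin n → ZMod 2) → (Fin n → ZMod 2))
    (hF : IsAPN F) : linF F ≤ 2 ^ n - 4 := by
  refine Finset.sup_le fun ⟨a, b⟩ hab => ?_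
  have hb : b ≠ 0 := (mem_filter.1 hab).2
  calc (walshF F a b).natAbs = (∑ x, APN.sgn (a ⬝ᵥ x + b ⬝ᵥ F x)).natAbs := rfl
    _ ≤ Fintype.card (Fin n → ZMod 2) - 4 := APN.natAbs_sum_sgn_le _
        (hF.two_le_card_dotProduct_add_eq hn hb a 0) (hF.two_le_card_dotProduct_add_eq hn hb a 1)
    _ = 2 ^ n - 4 := by simp
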